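/- Consequently, if Z is a smooth function on the Weyl chamber satisfying L_{SD} Z = 0, then Ψ := e^{−(N/η)Σ_i E_i²} Δ(E)^{1/2} Z satisfies H_CM Ψ = 0, where H_CM is the Calogero-Moser Hamiltonian with coupling β = 1/2. -/

import Mathlib

set_option maxRecDepth 8000
open Finset



/-- Partial derivative in the `i`-th coordinate direction. -/
noncomputable def pd {N : ℕ} (i : Fin N) (f : (Fin N → ℝ) → ℝ) (E : Fin N → ℝ) : ℝ :=
  fderiv ℝ f E (Pi.single i 1)

/-- The Vandermonde determinant `Δ(E) = ∏_{k<l} (E l - E k)`. -/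
def vand {N : ℕ} (E : Fin N → ℝ) : ℝ :=
  ∏ k : Fin N, ∏ l : Fin N, if k < l then E l - E k else 1

/-- The Schwinger–Dyson operator. -/
noncomputable def LSD {N : ℕ} (η : ℝ) (f : (Fin N → ℝ) → ℝ) (E : Fin N → ℝ) : ℝ :=
  η / (2 * N) * ∑ i, pd i (pd i f) E
    + η / (2 * N) * ∑ i, ∑ l ∈ Finset.univ.erase i, (E i - E l)⁻¹ * pd i f E
    - 2 * ∑ k, E k * pd k f E
    - (N : ℝ) * ((N : ℝ) + 1) / 2 * f E

/-- The Calogero–Moser Hamiltonian (coupling `β = 1/2`). -/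
noncomputable def HCM {N : ℕ} (η : ℝ) (f : (Fin N → ℝ) → ℝ) (E : Fin N → ℝ) : ℝ :=
  -(η / (2 * N)) *
      (∑ i, pd i (pd i f) E
        + (1 / 4) * ∑ i, ∑ j ∈ Finset.univ.erase i, ((E i - E j) ^ 2)⁻¹ * f E)
    + (2 * N / η) * (∑ i, (E i) ^ 2) * f E

section pdlem
variable {N : ℕ} {i : Fin N} {f g : (Fin N → ℝ) → ℝ} {E : Fin N → ℝ}

lemma pd_congr (h : f =ᶠ[nhds E] g) : pd i f E = pd i g E := by
  unfold pd; rw [Filter.EventuallyEq.fderiv_eq h]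

lemma pd_mul (hf : DifferentiableAt ℝ f E) (hg : DifferentiableAt ℝ g E) :
    pd i (fun y => f y * g y) E = pd i f E * g E + f E * pd i g E := by
  unfold pd; rw [fderiv_fun_mul hf hg]; simp; ring

lemma pd_add (hf : DifferentiableAt ℝ f E) (hg : DifferentiableAt ℝ g E) :
    pd i (fun y => f y + g y) E = pd i f E + pd i g E := by
  unfold pd; rw [fderiv_fun_add hf hg]; simp

lemma pd_sub (hf : DifferentiableAt ℝ f E) (hg : DifferentiableAt ℝ g E) :
    pd i (fun y => f y - g y) E = pd i f E - pd i g E := by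
  unfold pd; rw [fderiv_fun_sub hf hg]; simp

lemma pd_const_mul (c : ℝ) (hf : DifferentiableAt ℝ f E) :
    pd i (fun y => c * f y) E = c * pd i f E := by
  unfold pd; rw [fderiv_const_mul hf]; simp

lemma pd_sum {α : Type*} {s : Finset α} {F : α → (Fin N → ℝ) → ℝ}
    (hF : ∀ j ∈ s, DifferentiableAt ℝ (F j) E) :
    pd i (fun y => ∑ j ∈ s, F j y) E = ∑ j ∈ s, pd i (F j) E := by
  unfold pd; rw [fderiv_fun_sum hF]; simp

lemma pd_eval (j : Fin N) : pd i (fun y => y j) E = if j = i then 1 else 0 := by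
  unfold pd
  have : (fun y : Fin N → ℝ => y j) = (ContinuousLinearMap.proj j : (Fin N → ℝ) →L[ℝ] ℝ) := rfl
  rw [this, ContinuousLinearMap.fderiv]
  simp [Pi.single_apply]

lemma pd_inv (hf : DifferentiableAt ℝ f E) (h0 : f E ≠ 0) :
    pd i (fun y => (f y)⁻¹) E = -(f E ^ 2)⁻¹ * pd i f E := by
  unfold pd
  have h := ((hasDerivAt_inv h0).comp_hasFDerivAt E hf.hasFDerivAt).fderiv
  rw [show (fun y => (f y)⁻¹) = ((fun y : ℝ => y⁻¹) ∘ f) from rfl, h]; simp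

lemma pd_exp (hf : DifferentiableAt ℝ f E) :
    pd i (fun y => Real.exp (f y)) E = Real.exp (f E) * pd i f E := by
  unfold pd
  rw [(hf.hasFDerivAt.exp).fderiv]; simp

lemma pd_log (hf : DifferentiableAt ℝ f E) (h0 : f E ≠ 0) :
    pd i (fun y => Real.log (f y)) E = (f E)⁻¹ * pd i f E := by
  unfold pd
  rw [(hf.hasFDerivAt.log h0).fderiv]; simp

lemma pd_sq (j : Fin N) : pd i (fun y => y j ^ 2) E = (if j = i then 1 else 0) * (2 * E j) := by
  have : (fun y : Fin N → ℝ => y j ^ 2) = fun y => y j * y j := by ext y; ring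
  rw [this, pd_mul (differentiableAt_apply (𝕜 := ℝ) j E) (differentiableAt_apply (𝕜 := ℝ) j E),
    pd_eval]
  ring

end pdlem

noncomputable def phiF {N : ℕ} (α : ℝ) (y : Fin N → ℝ) : ℝ :=
  α * ∑ j, y j ^ 2 + (1/2) * ∑ k, ∑ l, if k < l then Real.log (y l - y k) else 0

noncomputable def sOne {N : ℕ} (i : Fin N) (y : Fin N → ℝ) : ℝ :=
  ∑ l ∈ univ.erase i, (y i - y l)⁻¹

noncomputable def gF {N : ℕ} (α : ℝ) (i : Fin N) (y : Fin N → ℝ) : ℝ :=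
  2 * α * y i + (1/2) * sOne i y

section calc1
variable {N : ℕ} {i : Fin N} {E : Fin N → ℝ} {α : ℝ}

lemma diff_sub_eval (k l : Fin N) : DifferentiableAt ℝ (fun y : Fin N → ℝ => y l - y k) E :=
  (differentiableAt_apply (𝕜 := ℝ) l E).sub (differentiableAt_apply (𝕜 := ℝ) k E)

lemma diff_sumsq : DifferentiableAt ℝ (fun y : Fin N → ℝ => α * ∑ j, y j ^ 2) E := by
  apply DifferentiableAt.const_mul
  apply DifferentiableAt.fun_sum
  intro j _
  exact (differentiableAt_apply (𝕜 := ℝ) j E).pow 2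

lemma diff_logterm (hE : StrictMono E) (k l : Fin N) :
    DifferentiableAt ℝ (fun y : Fin N → ℝ => if k < l then Real.log (y l - y k) else 0) E := by
  by_cases h : k < l
  · simp only [if_pos h]
    exact (diff_sub_eval k l).log (ne_of_gt (by have := hE h; linarith))
  · simp only [if_neg h]
    exact differentiableAt_const 0

lemma diff_phi (hE : StrictMono E) : DifferentiableAt ℝ (phiF (N := N) α) E := by
  unfold phiF
  apply diff_sumsq.add
  apply DifferentiableAt.const_mul
  apply DifferentiableAt.fun_sum
  intro k _
  apply DifferentiableAt.fun_sum
  intro l _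
  exact diff_logterm hE k l

lemma diff_inv_sub (hE : StrictMono E) (hl : l ∈ (univ : Finset (Fin N)).erase i) :
    DifferentiableAt ℝ (fun y : Fin N → ℝ => (y i - y l)⁻¹) E := by
  refine (diff_sub_eval l i).inv ?_
  have hne : l ≠ i := (Finset.mem_erase.mp hl).1
  rcases hne.lt_or_gt with h | h
  · exact ne_of_gt (by have := hE h; linarith)
  · exact ne_of_lt (by have := hE h; linarith)

lemma diff_sOne (hE : StrictMono E) : DifferentiableAt ℝ (sOne (N := N) i) E := by
  unfold sOne
  exact DifferentiableAt.fun_sum (fun l hl => diff_inv_sub hE hl)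

lemma diff_g (hE : StrictMono E) : DifferentiableAt ℝ (gF (N := N) α i) E := by
  unfold gF
  exact (((differentiableAt_apply (𝕜 := ℝ) i E).const_mul _)).add ((diff_sOne hE).const_mul _)

end calc1

section calc2
variable {N : ℕ} {i : Fin N} {E : Fin N → ℝ} {α : ℝ}

lemma pd_const (c : ℝ) : pd i (fun _ : Fin N → ℝ => c) E = 0 := by
  unfold pd; rw [fderiv_fun_const]; simp

lemma sum_erase_eq' {β : Type*} [DecidableEq β] (t : Finset β) (a : β) (g : β → ℝ) :
    ∑ x ∈ t.erase a, g x = ∑ x ∈ t, if x ≠ a then g x else 0 := by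
  rw [← Finset.filter_ne', Finset.sum_filter]

lemma sum_split (E : Fin N → ℝ) (i : Fin N) :
    (∑ k, ∑ l, if k < l then
        (E l - E k)⁻¹ * ((if l = i then (1:ℝ) else 0) - (if k = i then 1 else 0)) else 0)
      = sOne i E := by
  have step1 : ∀ k l : Fin N, (if k < l then
        (E l - E k)⁻¹ * ((if l = i then (1:ℝ) else 0) - (if k = i then 1 else 0)) else 0)
      = (if l = i then (if k < i then (E l - E k)⁻¹ else 0) else 0)
        + (if k = i then (if i < l then -(E l - E k)⁻¹ else 0) else 0) := by
    intro k l
    rcases eq_or_ne l i with h2 | h2 <;> rcases eq_or_ne k i with h3 | h3 <;>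
      by_cases h1 : k < l <;> simp_all <;> try ring
  rw [Finset.sum_congr rfl (fun k _ => Finset.sum_congr rfl (fun l _ => step1 k l))]
  rw [Finset.sum_congr rfl (fun k _ => Finset.sum_add_distrib), Finset.sum_add_distrib]
  have hA : ∀ k : Fin N, (∑ l : Fin N, if l = i then (if k < i then (E l - E k)⁻¹ else 0) else 0)
      = (if k < i then (E i - E k)⁻¹ else 0) := by
    intro k
    rw [Finset.sum_ite_eq' Finset.univ i (fun l => if k < i then (E l - E k)⁻¹ else 0)]
    simp
  have hB : (∑ k : Fin N, ∑ l : Fin N, if k = i then (if i < l then -(E l - E k)⁻¹ else 0) else 0)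
      = ∑ l : Fin N, (if i < l then -(E l - E i)⁻¹ else 0) := by
    rw [Finset.sum_comm]
    refine Finset.sum_congr rfl (fun l _ => ?_)
    rw [Finset.sum_ite_eq' Finset.univ i (fun k => if i < l then -(E l - E k)⁻¹ else 0)]
    simp
  rw [Finset.sum_congr rfl (fun k _ => hA k), hB]
  rw [sOne, sum_erase_eq', ← Finset.sum_add_distrib]
  refine Finset.sum_congr rfl (fun l _ => ?_)
  rcases lt_trichotomy l i with h | h | h
  · simp [h, not_lt_of_gt h, ne_of_lt h]
  · simp [h]
  · have hx : (E i - E l)⁻¹ = -(E l - E i)⁻¹ := by rw [← inv_neg, neg_sub]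
    simp [h, not_lt_of_gt h, ne_of_gt h, hx]

end calc2

section calc3
variable {N : ℕ} {i : Fin N} {E : Fin N → ℝ} {α : ℝ}

lemma pd_phi (hE : StrictMono E) : pd i (phiF (N := N) α) E = gF α i E := by
  unfold phiF
  rw [pd_add diff_sumsq (by
    apply DifferentiableAt.const_mul
    exact DifferentiableAt.fun_sum (fun k _ => DifferentiableAt.fun_sum (fun l _ => diff_logterm hE k l)))]
  have h1 : pd i (fun y : Fin N → ℝ => α * ∑ j, y j ^ 2) E = 2 * α * E i := by
    rw [pd_const_mul α (DifferentiableAt.fun_sum (fun j _ => (differentiableAt_apply (𝕜 := ℝ) j E).fun_pow 2))]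
    rw [pd_sum (fun j _ => (differentiableAt_apply (𝕜 := ℝ) j E).fun_pow 2)]
    rw [Finset.sum_congr rfl (fun j _ => pd_sq j)]
    simp [Finset.sum_ite_eq' Finset.univ i (fun j => 2 * E j)]
    ring
  have h2 : pd i (fun y : Fin N → ℝ =>
      (1/2) * ∑ k, ∑ l, if k < l then Real.log (y l - y k) else 0) E
      = (1/2) * sOne i E := by
    rw [pd_const_mul _ (DifferentiableAt.fun_sum (fun k _ =>
      DifferentiableAt.fun_sum (fun l _ => diff_logterm hE k l)))]
    rw [pd_sum (fun k _ => DifferentiableAt.fun_sum (fun l _ => diff_logterm hE k l))]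
    rw [Finset.sum_congr rfl (fun k _ => pd_sum (fun l _ => diff_logterm hE k l))]
    have key : ∀ k l : Fin N,
        pd i (fun y : Fin N → ℝ => if k < l then Real.log (y l - y k) else 0) E
        = if k < l then
            (E l - E k)⁻¹ * ((if l = i then (1:ℝ) else 0) - (if k = i then 1 else 0)) else 0 := by
      intro k l
      by_cases h : k < l
      · simp only [if_pos h]
        rw [pd_log (diff_sub_eval k l) (ne_of_gt (by have := hE h; linarith))]
        rw [pd_sub (differentiableAt_apply (𝕜 := ℝ) l E) (differentiableAt_apply (𝕜 := ℝ) k E),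
          pd_eval, pd_eval]
      · simp only [if_neg h]
        exact pd_const 0
    rw [Finset.sum_congr rfl (fun k _ => Finset.sum_congr rfl (fun l _ => key k l))]
    rw [sum_split E i]
  rw [h1, h2, gF]

lemma pd_g (hE : StrictMono E) :
    pd i (gF (N := N) α i) E
      = 2 * α - (1/2) * ∑ l ∈ univ.erase i, ((E i - E l) ^ 2)⁻¹ := by
  unfold gF
  rw [pd_add ((differentiableAt_apply (𝕜 := ℝ) i E).const_mul _) ((diff_sOne hE).const_mul _)]
  have h1 : pd i (fun y : Fin N → ℝ => 2 * α * y i) E = 2 * α := by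
    rw [pd_const_mul _ (differentiableAt_apply (𝕜 := ℝ) i E), pd_eval]
    simp
  have h2 : pd i (fun y : Fin N → ℝ => (1/2) * sOne i y) E
      = -(1/2) * ∑ l ∈ univ.erase i, ((E i - E l) ^ 2)⁻¹ := by
    rw [pd_const_mul _ (diff_sOne hE)]
    unfold sOne
    rw [pd_sum (fun l hl => diff_inv_sub hE hl)]
    have key : ∀ l ∈ (univ : Finset (Fin N)).erase i,
        pd i (fun y : Fin N → ℝ => (y i - y l)⁻¹) E = -((E i - E l) ^ 2)⁻¹ := by
      intro l hl
      have hne : l ≠ i := (Finset.mem_erase.mp hl).1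
      have h0 : E i - E l ≠ 0 := by
        rcases hne.lt_or_gt with h | h
        · exact ne_of_gt (by have := hE h; linarith)
        · exact ne_of_lt (by have := hE h; linarith)
      rw [show (fun y : Fin N → ℝ => (y i - y l)⁻¹) = (fun y => ((fun z : Fin N → ℝ => z i - z l) y)⁻¹) from rfl]
      rw [pd_inv (diff_sub_eval l i) h0]
      rw [pd_sub (differentiableAt_apply (𝕜 := ℝ) i E) (differentiableAt_apply (𝕜 := ℝ) l E),
        pd_eval, pd_eval]
      simp [hne]
    rw [Finset.sum_congr rfl key, Finset.sum_neg_distrib]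
    ring
  rw [h1, h2]
  ring

end calc3

section weyl
variable {N : ℕ} {E : Fin N → ℝ}

lemma isOpen_weyl : IsOpen {E : Fin N → ℝ | StrictMono E} := by
  have : {E : Fin N → ℝ | StrictMono E}
      = ⋂ p ∈ {p : Fin N × Fin N | p.1 < p.2}, {E : Fin N → ℝ | E p.1 < E p.2} := by
    ext E
    simp only [Set.mem_iInter, Set.mem_setOf_eq]
    exact ⟨fun h p hp => h hp, fun h a b hab => h (a, b) hab⟩
  rw [this]
  apply Set.Finite.isOpen_biInter (Set.toFinite _)
  intro p _
  exact isOpen_lt (continuous_apply p.1) (continuous_apply p.2)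

lemma vand_pos (hE : StrictMono E) : 0 < vand E := by
  unfold vand
  apply Finset.prod_pos
  intro k _
  apply Finset.prod_pos
  intro l _
  split
  · next h => linarith [hE h]
  · norm_num

lemma log_vand (hE : StrictMono E) :
    Real.log (vand E) = ∑ k : Fin N, ∑ l : Fin N, if k < l then Real.log (E l - E k) else 0 := by
  unfold vand
  rw [Real.log_prod]
  · apply Finset.sum_congr rfl
    intro k _
    rw [Real.log_prod]
    · apply Finset.sum_congr rfl
      intro l _
      split
      · rfl
      · simp
    · intro l _
      split
      · next h => have := hE h; exact ne_of_gt (by linarith)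
      · norm_num
  · intro k _
    apply ne_of_gt
    apply Finset.prod_pos
    intro l _
    split
    · next h => linarith [hE h]
    · norm_num

lemma sqrt_vand (hE : StrictMono E) :
    Real.sqrt (vand E)
      = Real.exp ((1/2) * ∑ k : Fin N, ∑ l : Fin N, if k < l then Real.log (E l - E k) else 0) := by
  rw [Real.sqrt_eq_rpow, Real.rpow_def_of_pos (vand_pos hE), log_vand hE]
  ring_nf

end weyl

section sums
variable {N : ℕ} {E : Fin N → ℝ}

lemma sum_erase_eq {α : Type*} [DecidableEq α] (t : Finset α) (a : α) (g : α → ℝ) :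
    ∑ x ∈ t.erase a, g x = ∑ x ∈ t, if x ≠ a then g x else 0 := by
  rw [← Finset.filter_ne', Finset.sum_filter]

lemma sum_erase_comm (f : Fin N → Fin N → ℝ) :
    ∑ i, ∑ l ∈ univ.erase i, f i l = ∑ i, ∑ l ∈ univ.erase i, f l i := by
  rw [Finset.sum_comm' (s' := fun l => univ.erase l) (t' := univ)]
  intro x y
  simp [ne_comm, and_comm]

lemma idA (hinj : Function.Injective E) (hN : 2 ≤ N) :
    ∑ i, ∑ l ∈ univ.erase i, E i * (E i - E l)⁻¹ = (N : ℝ) * ((N : ℝ) - 1) / 2 := by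
  have key : (∑ i, ∑ l ∈ univ.erase i, E i * (E i - E l)⁻¹) * 2 = (N : ℝ) * ((N : ℝ) - 1) := by
    rw [mul_two]
    nth_rewrite 2 [sum_erase_comm (fun i l => E i * (E i - E l)⁻¹)]
    rw [← Finset.sum_add_distrib]
    have : ∀ i : Fin N, (∑ l ∈ univ.erase i, E i * (E i - E l)⁻¹)
        + (∑ l ∈ univ.erase i, E l * (E l - E i)⁻¹) = (N : ℝ) - 1 := by
      intro i
      rw [← Finset.sum_add_distrib]
      have : ∀ l ∈ univ.erase i, E i * (E i - E l)⁻¹ + E l * (E l - E i)⁻¹ = 1 := by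
        intro l hl
        have hne : E i - E l ≠ 0 :=
          sub_ne_zero.mpr (fun h => (Finset.mem_erase.mp hl).1 (hinj h).symm)
        have hne' : E l - E i ≠ 0 := fun h => hne (by linarith [sub_eq_zero.mp h])
        field_simp
        ring
      rw [Finset.sum_congr rfl this, Finset.sum_const, Finset.card_erase_of_mem (Finset.mem_univ i),
        Finset.card_univ, Fintype.card_fin]
      have h1 : (1:ℕ) ≤ N := by omega
      rw [nsmul_eq_mul, mul_one, Nat.cast_sub h1]
      norm_num
    rw [Finset.sum_congr rfl (fun i _ => this i), Finset.sum_const, Finset.card_univ,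
      Fintype.card_fin]
    push_cast
    ring
  linarith

def T3 (N : ℕ) : Finset (Fin N × Fin N × Fin N) :=
  Finset.univ.filter (fun p => p.2.1 ≠ p.1 ∧ p.2.2 ≠ p.1 ∧ p.2.2 ≠ p.2.1)

lemma triple_sum_eq (F : Fin N → Fin N → Fin N → ℝ) :
    ∑ i, ∑ l ∈ univ.erase i, ∑ m ∈ (univ.erase i).erase l, F i l m
      = ∑ p ∈ T3 N, F p.1 p.2.1 p.2.2 := by
  rw [T3, Finset.sum_filter, Fintype.sum_prod_type]
  apply Finset.sum_congr rfl
  intro i _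
  rw [Fintype.sum_prod_type, sum_erase_eq]
  apply Finset.sum_congr rfl
  intro l _
  by_cases h1 : l ≠ i
  · rw [if_pos h1, sum_erase_eq, sum_erase_eq]
    apply Finset.sum_congr rfl
    intro m _
    by_cases h2 : m ≠ i <;> by_cases h3 : m ≠ l <;> simp [h1, h2, h3]
  · rw [if_neg h1]
    rw [eq_comm, Finset.sum_eq_zero]
    intro m _
    simp [h1]

lemma cyclic_sum (f : Fin N → Fin N → Fin N → ℝ) :
    ∑ p ∈ T3 N, f p.1 p.2.1 p.2.2 = ∑ p ∈ T3 N, f p.2.1 p.2.2 p.1 := by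
  apply Finset.sum_nbij' (i := fun p => (p.2.2, p.1, p.2.1)) (j := fun p => (p.2.1, p.2.2, p.1))
  · intro p hp; simp only [T3, Finset.mem_filter, Finset.mem_univ, true_and] at hp ⊢
    exact ⟨hp.2.1.symm, hp.2.2.symm, hp.1⟩
  · intro p hp; simp only [T3, Finset.mem_filter, Finset.mem_univ, true_and] at hp ⊢
    exact ⟨hp.2.2, hp.1.symm, hp.2.1.symm⟩
  · intro p _; rfl
  · intro p _; rfl
  · intro p _; rfl

lemma idB (hinj : Function.Injective E) :
    ∑ p ∈ T3 N, (E p.1 - E p.2.1)⁻¹ * (E p.1 - E p.2.2)⁻¹ = 0 := by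
  have h1 := cyclic_sum (N := N) (fun i l m => (E i - E l)⁻¹ * (E i - E m)⁻¹)
  have h2 := cyclic_sum (N := N) (fun i l m => (E l - E m)⁻¹ * (E l - E i)⁻¹)
  have h4 := h1.trans h2
  have key : (∑ p ∈ T3 N, (E p.1 - E p.2.1)⁻¹ * (E p.1 - E p.2.2)⁻¹) * 3 = 0 := by
    rw [show (3:ℝ) = 1 + 1 + 1 by norm_num, mul_add, mul_add, mul_one]
    nth_rewrite 2 [h1]
    nth_rewrite 2 [h4]
    rw [← Finset.sum_add_distrib, ← Finset.sum_add_distrib]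
    apply Finset.sum_eq_zero
    intro p hp
    simp only [T3, Finset.mem_filter, Finset.mem_univ, true_and] at hp
    have d1 : E p.1 - E p.2.1 ≠ 0 := sub_ne_zero.mpr (fun h => hp.1 (hinj h).symm)
    have d2 : E p.1 - E p.2.2 ≠ 0 := sub_ne_zero.mpr (fun h => hp.2.1 (hinj h).symm)
    have d3 : E p.2.1 - E p.2.2 ≠ 0 := sub_ne_zero.mpr (fun h => hp.2.2 (hinj h).symm)
    have d1' : E p.2.1 - E p.1 ≠ 0 := fun h => d1 (by linarith [sub_eq_zero.mp h])
    have d2' : E p.2.2 - E p.1 ≠ 0 := fun h => d2 (by linarith [sub_eq_zero.mp h])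
    have d3' : E p.2.2 - E p.2.1 ≠ 0 := fun h => d3 (by linarith [sub_eq_zero.mp h])
    field_simp
    ring
  linarith

lemma idC (hinj : Function.Injective E) :
    ∑ i, (∑ l ∈ univ.erase i, (E i - E l)⁻¹) ^ 2
      = ∑ i, ∑ l ∈ univ.erase i, ((E i - E l) ^ 2)⁻¹ := by
  have expand : ∀ i : Fin N, (∑ l ∈ univ.erase i, (E i - E l)⁻¹) ^ 2
      = (∑ l ∈ univ.erase i, ((E i - E l) ^ 2)⁻¹)
        + ∑ l ∈ univ.erase i, ∑ m ∈ (univ.erase i).erase l, (E i - E l)⁻¹ * (E i - E m)⁻¹ := by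
    intro i
    rw [sq, Finset.sum_mul_sum]
    rw [← Finset.sum_add_distrib]
    apply Finset.sum_congr rfl
    intro l hl
    rw [← Finset.add_sum_erase _ _ hl]
    congr 1
    rw [← sq, ← inv_pow]
  rw [Finset.sum_congr rfl (fun i _ => expand i), Finset.sum_add_distrib,
    triple_sum_eq, idB hinj, add_zero]

end sums

lemma scalar_key (Nr η P Zv SZZ SSZ SEZ SQ A2 : ℝ) (hN : Nr ≠ 0) (hη : η ≠ 0)
    (hsd : η/(2*Nr)*SZZ + η/(2*Nr)*SSZ - 2*SEZ - Nr*(Nr+1)/2*Zv = 0) :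
    -(η/(2*Nr)) * (4*(-(Nr/η))^2*P*Zv*A2 + 2*(-(Nr/η))*P*Zv*(Nr*(Nr-1)/2) + P*Zv/4*SQ
      + 4*(-(Nr/η))*P*SEZ + P*SSZ + 2*(-(Nr/η))*P*(Nr*Zv) + -(P*Zv)/2*SQ + P*SZZ
      + 1/4*(SQ*(P*Zv))) + 2*Nr/η*A2*(P*Zv) = 0 := by
  have hsd2 : η * SZZ + η * SSZ = 4*Nr*SEZ + Nr*Nr*(Nr+1)*Zv := by
    field_simp at hsd
    linarith
  field_simp
  linear_combination (-8*η*P) * hsd2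

/-- If `Z` is smooth on the Weyl chamber and satisfies `L_SD Z = 0` there, then
`Ψ = e^{-(N/η)∑ E_i²} Δ(E)^{1/2} Z` is a zero-energy solution of the Calogero–Moser
Schrödinger equation: `H_CM Ψ = 0`. -/
theorem stmt13 (N : ℕ) (hN : 2 ≤ N) (η : ℝ) (hη : 0 < η)
    (Z : (Fin N → ℝ) → ℝ)
    (hZ : ContDiffOn ℝ (⊤ : ℕ∞) Z {E : Fin N → ℝ | StrictMono E})
    (hSD : ∀ E : Fin N → ℝ, StrictMono E → LSD η Z E = 0)
    (E : Fin N → ℝ) (hE : StrictMono E) :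
    HCM η
      (fun y => Real.exp (-((N : ℝ) / η) * ∑ i, (y i) ^ 2) * Real.sqrt (vand y) * Z y)
      E = 0 := by
  classical
  have hN0 : (0:ℝ) < (N:ℝ) := by exact_mod_cast Nat.lt_of_lt_of_le (by norm_num) hN
  have hNne : ((N:ℝ)) ≠ 0 := ne_of_gt hN0
  have hηne : η ≠ 0 := ne_of_gt hη
  set α : ℝ := -((N:ℝ)/η) with hα
  have hinj := hE.injective
  have hUopen : IsOpen {E : Fin N → ℝ | StrictMono E} := isOpen_weyl
  have hmem : ∀ {y : Fin N → ℝ}, StrictMono y → {E : Fin N → ℝ | StrictMono E} ∈ nhds y :=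
    fun hy => hUopen.mem_nhds hy
  have hZdiff : ∀ y : Fin N → ℝ, StrictMono y → DifferentiableAt ℝ Z y := fun y hy =>
    ((hZ.differentiableOn (by simp)).differentiableAt (hmem hy))
  have hdZ : ∀ i : Fin N, ContDiffOn ℝ (⊤ : ℕ∞) (pd i Z) {E : Fin N → ℝ | StrictMono E} := by
    intro i
    have h1 := hZ.fderiv_of_isOpen (m := (⊤ : ℕ∞)) hUopen (by simp)
    have h2 := (ContinuousLinearMap.apply ℝ ℝ (Pi.single i 1)).contDiff.comp_contDiffOn h1
    exact h2.congr (fun y _ => rfl)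
  have hpdZdiff : ∀ (i : Fin N) (y : Fin N → ℝ), StrictMono y →
      DifferentiableAt ℝ (pd i Z) y := fun i y hy =>
    ((hdZ i).differentiableOn (by simp)).differentiableAt (hmem hy)
  have hW : ∀ y : Fin N → ℝ, StrictMono y →
      Real.exp (-((N : ℝ) / η) * ∑ i, (y i) ^ 2) * Real.sqrt (vand y)
        = Real.exp (phiF α y) := by
    intro y hy
    rw [sqrt_vand hy, ← Real.exp_add, phiF, hα]
  have hfeq : ∀ y : Fin N → ℝ, StrictMono y →
      (fun y => Real.exp (-((N : ℝ) / η) * ∑ i, (y i) ^ 2) * Real.sqrt (vand y) * Z y)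
        =ᶠ[nhds y] fun y => Real.exp (phiF α y) * Z y := by
    intro y hy
    exact Filter.eventuallyEq_of_mem (hmem hy) (fun x hx => by
      simp only [hW x hx])
  have step1 : ∀ (i : Fin N) (y : Fin N → ℝ), StrictMono y →
      pd i (fun y => Real.exp (-((N : ℝ) / η) * ∑ i, (y i) ^ 2) * Real.sqrt (vand y) * Z y) y
        = Real.exp (phiF α y) * (gF α i y * Z y + pd i Z y) := by
    intro i y hy
    rw [pd_congr (hfeq y hy),
      pd_mul ((diff_phi hy).exp) (hZdiff y hy), pd_exp (diff_phi hy), pd_phi hy]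
    ring
  have step2 : ∀ i : Fin N,
      pd i (pd i (fun y => Real.exp (-((N : ℝ) / η) * ∑ i, (y i) ^ 2)
          * Real.sqrt (vand y) * Z y)) E
        = Real.exp (phiF α E) * ((gF α i E) ^ 2 * Z E + 2 * gF α i E * pd i Z E
            + (2 * α - (1/2) * ∑ l ∈ univ.erase i, ((E i - E l) ^ 2)⁻¹) * Z E
            + pd i (pd i Z) E) := by
    intro i
    have heq2 : pd i (fun y => Real.exp (-((N : ℝ) / η) * ∑ i, (y i) ^ 2)
        * Real.sqrt (vand y) * Z y)
        =ᶠ[nhds E] (fun y => Real.exp (phiF α y) * (gF α i y * Z y + pd i Z y)) :=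
      Filter.eventuallyEq_of_mem (hmem hE) (fun x hx => step1 i x hx)
    rw [pd_congr heq2,
      pd_mul ((diff_phi hE).exp) (((diff_g hE).fun_mul (hZdiff E hE)).fun_add (hpdZdiff i E hE)),
      pd_exp (diff_phi hE), pd_phi hE,
      pd_add ((diff_g hE).fun_mul (hZdiff E hE)) (hpdZdiff i E hE),
      pd_mul (diff_g hE) (hZdiff E hE), pd_g hE]
    ring
  rw [HCM]
  rw [Finset.sum_congr rfl (fun i (_ : i ∈ univ) => step2 i)]
  have hWE : Real.exp (α * ∑ i, E i ^ 2) * Real.sqrt (vand E) = Real.exp (phiF α E) :=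
    hW E hE
  rw [hWE]
  have hexpand : ∀ i ∈ (Finset.univ : Finset (Fin N)),
      Real.exp (phiF α E) *
        (gF α i E ^ 2 * Z E + 2 * gF α i E * pd i Z E +
            (2 * α - 1 / 2 * ∑ l ∈ Finset.univ.erase i, ((E i - E l) ^ 2)⁻¹) * Z E +
          pd i (pd i Z) E)
      = (4*α^2*Real.exp (phiF α E)*Z E) * E i ^ 2
        + (2*α*Real.exp (phiF α E)*Z E) * (E i * sOne i E)
        + (Real.exp (phiF α E)*Z E/4) * (sOne i E)^2
        + (4*α*Real.exp (phiF α E)) * (E i * pd i Z E)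
        + Real.exp (phiF α E) * (sOne i E * pd i Z E)
        + (2*α*Real.exp (phiF α E)*Z E)
        + (-(Real.exp (phiF α E)*Z E)/2) * (∑ l ∈ Finset.univ.erase i, ((E i - E l) ^ 2)⁻¹)
        + Real.exp (phiF α E) * pd i (pd i Z) E := by
    intro i _
    rw [gF]
    ring
  rw [Finset.sum_congr rfl hexpand]
  simp only [Finset.sum_add_distrib, ← Finset.mul_sum, Finset.sum_const, Finset.card_univ,
    Fintype.card_fin, nsmul_eq_mul]
  have hA : ∑ i, (E i * sOne i E) = (N:ℝ)*((N:ℝ)-1)/2 := by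
    rw [Finset.sum_congr rfl (fun i (_ : i ∈ Finset.univ) => by rw [sOne, Finset.mul_sum])]
    exact idA hinj hN
  have hC : ∑ i, (sOne i E)^2 = ∑ i, ∑ l ∈ Finset.univ.erase i, ((E i - E l)^2)⁻¹ := by
    simp only [sOne]
    exact idC hinj
  rw [hA, hC]
  have hsd := hSD E hE
  rw [LSD] at hsd
  have hrw : ∑ i, ∑ l ∈ Finset.univ.erase i, (E i - E l)⁻¹ * pd i Z E
      = ∑ i, sOne i E * pd i Z E :=
    Finset.sum_congr rfl (fun i _ => by rw [sOne, Finset.sum_mul])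
  rw [hrw] at hsd
  set P := Real.exp (phiF α E) with hP
  set Zv := Z E with hZv
  set SZZ := ∑ i, pd i (pd i Z) E with hSZZ
  set SSZ := ∑ i, sOne i E * pd i Z E with hSSZ
  set SEZ := ∑ k, E k * pd k Z E with hSEZ
  set SQ := ∑ i, ∑ l ∈ Finset.univ.erase i, ((E i - E l)^2)⁻¹ with hSQ
  set A2 := ∑ i, E i ^ 2 with hA2
  have hPot : (∑ i, ∑ j ∈ Finset.univ.erase i, ((E i - E j)^2)⁻¹ * (P * Zv)) = SQ * (P * Zv) := by
    rw [hSQ, Finset.sum_mul]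
    exact Finset.sum_congr rfl (fun i _ => by rw [Finset.sum_mul])
  rw [hPot, hα]
  linear_combination scalar_key (N:ℝ) η P Zv SZZ SSZ SEZ SQ A2 hNne hηne hsd
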